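/- Let $K$ be a field with a proper adelic structure satisfying Northcott's property, and suppose there is a positive integer $p_0$ such that $F_p(K)$ is finite for every prime $p \geq p_0$. Then the set of positive integers $N$ such that the Fermat curve $F_N$ has Fermat's property over $K$ has natural density $1$: $\lim_{m\to\infty} \#\{1 \leq N \leq m : F_N \text{ has Fermat's property over } K\}/m = 1$. -/

import Mathlib

open MeasureTheory

/-- A (proper) adelic structure on a field `K`: a measure space `Ω`, a family of
absolute values of `K` indexed by `Ω`, such that `ω ↦ log |a|_ω` is integrable for
every `a ∈ K^×`, and the product formula `∫ log |a|_ω dν = 0` holds. -/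
structure ProperAdelicStructure (K : Type) [Field K] (Ω : Type) [MeasurableSpace Ω] where
  ν : Measure Ω
  absv : Ω → AbsoluteValue K ℝ
  integrable_log : ∀ a : K, a ≠ 0 → Integrable (fun ω => Real.log (absv ω a)) ν
  product_formula : ∀ a : K, a ≠ 0 → ∫ ω, Real.log (absv ω a) ∂ν = 0

/-- The height of a tuple of elements of `K` with respect to an adelic structure. -/
noncomputable def ProperAdelicStructure.height {K Ω : Type} [Field K] [MeasurableSpace Ω]
    (S : ProperAdelicStructure K Ω) {m : ℕ} (x : Fin m → K) : ℝ :=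
  ∫ ω, Real.log (⨆ i, S.absv ω (x i)) ∂S.ν

/-- Northcott's property: sets of elements of `K` of bounded height are finite. -/
def ProperAdelicStructure.Northcott {K Ω : Type} [Field K] [MeasurableSpace Ω]
    (S : ProperAdelicStructure K Ω) : Prop :=
  ∀ C : ℝ, {a : K | ∫ ω, Real.log (max (S.absv ω a) 1) ∂S.ν ≤ C}.Finite

/-- `x` is zero or a root of unity. -/
def IsZeroOrRootOfUnity {K : Type} [Field K] (x : K) : Prop :=
  x = 0 ∨ ∃ k : ℕ, 0 < k ∧ x ^ k = 1

/-!
Let `p ≥ p₀` be prime and `x ^ (p * M) + y ^ (p * M) = 1` with `x` neither zero nor a root of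
unity. Then `(x ^ M, y ^ M)` is one of the finitely many points of `F_p`, so
`M h(x) = h(x ^ M)` is bounded; by Northcott's property `x` ranges over a finite set, and for each
such `x` the exponent `M` is determined by `x ^ M`. So each large prime divides only finitely
many `N` for which Fermat's property fails. Since `∑ 1/p` diverges, the Euler product
`∏ (1 - 1/q)` over finitely many large primes is arbitrarily small, and sieving by them shows
that the exceptional `N` have density zero.
-/

open Filter Finset Topology

def HasFermatProperty (K : Type) [Field K] (N : ℕ) : Prop :=
  ∀ x y : K, x ^ N + y ^ N = 1 → IsZeroOrRootOfUnity x ∧ IsZeroOrRootOfUnity y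

lemma pow_injective_of_not_isZeroOrRootOfUnity {K : Type} [Field K] {x : K}
    (hx : ¬IsZeroOrRootOfUnity x) : Function.Injective (x ^ · : ℕ → K) := by
  have hx0 : x ≠ 0 := fun h => hx (.inl h)
  have key : ∀ i j : ℕ, i < j → x ^ i ≠ x ^ j := fun i j hij hpow =>
    hx (.inr ⟨j - i, by omega, by
      rw [pow_sub₀ x hx0 hij.le, ← hpow, mul_inv_cancel₀ (pow_ne_zero i hx0)]⟩)
  intro i j hpow
  rcases lt_trichotomy i j with h | h | h
  · exact absurd hpow (key i j h)
  · exact h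
  · exact absurd hpow.symm (key j i h)

lemma finite_fermat_affine_of_finite_projective {K : Type} [Field K] {n : ℕ}
    (h : {q : Projectivization K (Fin 3 → K) |
      q.rep 0 ^ n + q.rep 1 ^ n = q.rep 2 ^ n}.Finite) :
    {xy : K × K | xy.1 ^ n + xy.2 ^ n = 1}.Finite := by
  have hne (xy : K × K) : ![xy.1, xy.2, 1] ≠ 0 := fun h0 => by simpa using congrFun h0 2
  refine h.of_injOn (f := fun xy => .mk K ![xy.1, xy.2, 1] (hne xy)) ?_ ?_
  · rintro ⟨x, y⟩ hxy
    obtain ⟨c, hc⟩ := Projectivization.exists_smul_eq_mk_rep K _ (hne (x, y))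
    replace hxy : x ^ n + y ^ n = 1 := hxy
    simp [← hc, Units.smul_def, mul_pow, ← mul_add, hxy]
  · rintro ⟨x, y⟩ _ ⟨x', y'⟩ _ hmk
    obtain ⟨c, hc⟩ := (Projectivization.mk_eq_mk_iff K _ _ (hne _) (hne _)).1 hmk
    have hc1 : (c : K) = 1 := by simpa [Units.smul_def] using congrFun hc 2
    have hx := congrFun hc 0
    have hy := congrFun hc 1
    simp only [Units.smul_def, hc1, one_smul] at hx hy
    simp_all

namespace ProperAdelicStructure

variable {K Ω : Type} [Field K] [MeasurableSpace Ω] {S : ProperAdelicStructure K Ω}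

variable (S) in
/-- The height `h(1 : a)`, as bounded in `Northcott`. -/
noncomputable def affineHeight (a : K) : ℝ :=
  ∫ ω, Real.log (max (S.absv ω a) 1) ∂S.ν

lemma affineHeight_nonneg (a : K) : 0 ≤ S.affineHeight a :=
  integral_nonneg fun _ => Real.log_nonneg (le_max_right _ _)

lemma affineHeight_pow (a : K) (k : ℕ) : S.affineHeight (a ^ k) = k * S.affineHeight a := by
  rw [affineHeight, affineHeight, ← integral_const_mul]
  congr 1 with ω
  rw [map_pow, ← Real.log_pow,
    pow_left_monotoneOn.map_max ((S.absv ω).nonneg a) zero_le_one, one_pow]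

lemma Northcott.finite_setOf_pow_mem (hNor : S.Northcott) {E : Set K} (hE : E.Finite) :
    {M : ℕ | ∃ x : K, ¬IsZeroOrRootOfUnity x ∧ x ^ M ∈ E}.Finite := by
  obtain ⟨C, hC⟩ := (hE.image S.affineHeight).bddAbove
  have hX : {x : K | S.affineHeight x ≤ C ∧ ¬IsZeroOrRootOfUnity x}.Finite :=
    (hNor C).subset fun _ hx => hx.1
  refine ((hX.biUnion fun x hx =>
    hE.preimage (pow_injective_of_not_isZeroOrRootOfUnity hx.2).injOn).insert 0).subset ?_
  rintro M ⟨x, hx, hxM⟩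
  rcases Nat.eq_zero_or_pos M with rfl | hM
  · exact Set.mem_insert 0 _
  refine Set.mem_insert_of_mem 0 (Set.mem_biUnion ⟨?_, hx⟩ hxM)
  calc S.affineHeight x ≤ M * S.affineHeight x :=
        le_mul_of_one_le_left (S.affineHeight_nonneg x) (by exact_mod_cast hM)
    _ = S.affineHeight (x ^ M) := (S.affineHeight_pow x M).symm
    _ ≤ C := hC (Set.mem_image_of_mem _ hxM)

lemma Northcott.finite_setOf_not_hasFermatProperty_dvd (hNor : S.Northcott) {p : ℕ}
    (hp : {xy : K × K | xy.1 ^ p + xy.2 ^ p = 1}.Finite) :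
    {N : ℕ | ¬HasFermatProperty K N ∧ p ∣ N}.Finite := by
  refine ((hNor.finite_setOf_pow_mem (hp.image Prod.fst)).image (p * ·)).subset ?_
  rintro N ⟨hN, M, rfl⟩
  simp only [HasFermatProperty, not_forall, not_and_or] at hN
  obtain ⟨x, y, hxy, hx | hy⟩ := hN
  · refine ⟨M, ⟨x, hx, (x ^ M, y ^ M), ?_, rfl⟩, rfl⟩
    simpa [← pow_mul, mul_comm M] using hxy
  · refine ⟨M, ⟨y, hy, (y ^ M, x ^ M), ?_, rfl⟩, rfl⟩
    simpa [← pow_mul, mul_comm M, add_comm] using hxy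

end ProperAdelicStructure

open Nat in
lemma totient_prod_primes_div_le_exp {s : Finset ℕ} (hs : ∀ q ∈ s, q.Prime) :
    (φ (∏ q ∈ s, q) : ℝ) / (∏ q ∈ s, q : ℕ) ≤ Real.exp (-∑ q ∈ s, (q : ℝ)⁻¹) := by
  have hP : ∏ q ∈ s, (q : ℝ) ≠ 0 :=
    Finset.prod_ne_zero_iff.2 fun q hq => by exact_mod_cast (hs q hq).ne_zero
  have euler := congrArg (Rat.cast : ℚ → ℝ) (totient_eq_mul_prod_factors (∏ q ∈ s, q))
  push_cast [primeFactors_prod hs] at euler ⊢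
  rw [euler, mul_div_cancel_left₀ _ hP, ← Finset.sum_neg_distrib, Real.exp_sum]
  exact Finset.prod_le_prod (fun q hq => sub_nonneg.2 (inv_le_one_of_one_le₀ (by
    exact_mod_cast (hs q hq).one_le))) fun q _ => Real.one_sub_le_exp_neg _

open Nat in
lemma exists_primes_totient_prod_div_lt (p₀ : ℕ) {ε : ℝ} (hε : 0 < ε) :
    ∃ s : Finset ℕ, (∀ q ∈ s, q.Prime ∧ p₀ ≤ q) ∧
      (φ (∏ q ∈ s, q) : ℝ) / (∏ q ∈ s, q : ℕ) < ε := by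
  set f : ℕ → ℝ := Set.indicator {q | q.Prime ∧ p₀ ≤ q} fun n => (n : ℝ)⁻¹
  have hf : ¬Summable f := fun h => not_summable_one_div_on_primes <| h.congr_cofinite <| by
    filter_upwards [Nat.cofinite_eq_atTop ▸ eventually_ge_atTop p₀] with n hn
    by_cases hn' : n.Prime <;> simp [f, hn, hn']
  obtain ⟨n, hn⟩ := ((not_summable_iff_tendsto_nat_atTop_of_nonneg
    (Set.indicator_nonneg fun _ _ => by positivity)).1 hf).eventually_gt_atTop (-Real.log ε)
    |>.exists
  refine ⟨(range n).filter fun q => q.Prime ∧ p₀ ≤ q, fun q hq => (Finset.mem_filter.1 hq).2, ?_⟩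
  refine (totient_prod_primes_div_le_exp fun q hq => (Finset.mem_filter.1 hq).2.1).trans_lt ?_
  rw [Finset.sum_indicator_eq_sum_filter] at hn
  rw [← Real.exp_log hε, Real.exp_lt_exp]
  exact neg_lt.1 hn

open Nat in
lemma card_filter_Icc_le {Q : ℕ → Prop} [DecidablePred Q] {P : ℕ} (hP : P ≠ 0)
    (hfin : {N | Q N ∧ ¬P.Coprime N}.Finite) (m : ℕ) :
    #{N ∈ Icc 1 m | Q N} ≤ hfin.toFinset.card + φ P * (m / P + 1) := by
  calc #{N ∈ Icc 1 m | Q N}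
      ≤ #(hfin.toFinset ∪ {N ∈ Ico 1 (1 + m) | P.Coprime N}) := by
        refine card_le_card fun N hN => ?_
        simp only [mem_filter, mem_Icc] at hN
        by_cases hcop : P.Coprime N
        · exact mem_union_right _ (mem_filter.2 ⟨mem_Ico.2 ⟨hN.1.1, by omega⟩, hcop⟩)
        · exact mem_union_left _ (hfin.mem_toFinset.2 ⟨hN.2, hcop⟩)
    _ ≤ hfin.toFinset.card + φ P * (m / P + 1) :=
        (card_union_le _ _).trans (Nat.add_le_add_left (Ico_filter_coprime_le 1 m hP) _)

theorem tendsto_card_filter_Icc_div_zero {Q : ℕ → Prop} [DecidablePred Q] (p₀ : ℕ)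
    (hQ : ∀ p : ℕ, p.Prime → p₀ ≤ p → {N | Q N ∧ p ∣ N}.Finite) :
    Tendsto (fun m : ℕ => (#{N ∈ Icc 1 m | Q N} : ℝ) / m) atTop (𝓝 0) := by
  refine tendsto_order.2 ⟨fun a ha => .of_forall fun m => ha.trans_le (by positivity),
    fun ε hε => ?_⟩
  obtain ⟨s, hs, hsε⟩ := exists_primes_totient_prod_div_lt p₀ (half_pos hε)
  set P := ∏ q ∈ s, q
  have hP : P ≠ 0 := prod_ne_zero_iff.2 fun q hq => (hs q hq).1.ne_zero
  have hfin : {N | Q N ∧ ¬P.Coprime N}.Finite := by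
    refine (s.finite_toSet.biUnion fun q hq => hQ q (hs q hq).1 (hs q hq).2).subset ?_
    rintro N ⟨hN, hcop⟩
    obtain ⟨q, hq, hqN⟩ := by simpa [P, Nat.coprime_prod_left_iff] using hcop
    exact Set.mem_biUnion hq ⟨hN, ((hs q hq).1.dvd_iff_not_coprime).2 hqN⟩
  set c : ℝ := hfin.toFinset.card + P.totient
  filter_upwards [(tendsto_const_div_atTop_nhds_zero_nat c).eventually (gt_mem_nhds (half_pos hε)),
    eventually_gt_atTop 0] with m hcm hm
  have hm' : (0 : ℝ) < m := by exact_mod_cast hm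
  calc (#{N ∈ Icc 1 m | Q N} : ℝ) / m
      ≤ (hfin.toFinset.card + P.totient * ((m / P : ℕ) + 1) : ℝ) / m := by
        gcongr
        exact_mod_cast card_filter_Icc_le hP hfin m
    _ ≤ (hfin.toFinset.card + P.totient * ((m : ℝ) / P + 1)) / m := by
        gcongr
        exact Nat.cast_div_le
    _ = c / m + P.totient / P := by
        field_simp
        ring
    _ < ε / 2 + ε / 2 := add_lt_add hcm hsε
    _ = ε := add_halves ε

theorem tendsto_ncard_div_one_of_tendsto_compl {Q : ℕ → Prop} [DecidablePred Q]
    (h : Tendsto (fun m : ℕ => (#{N ∈ Icc 1 m | ¬Q N} : ℝ) / m) atTop (𝓝 0)) :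
    Tendsto (fun m : ℕ => ({N | 1 ≤ N ∧ N ≤ m ∧ Q N}.ncard : ℝ) / m) atTop (𝓝 1) := by
  have hsub : Tendsto (fun m : ℕ => 1 - (#{N ∈ Icc 1 m | ¬Q N} : ℝ) / m) atTop (𝓝 1) := by
    simpa using tendsto_const_nhds.sub h
  refine hsub.congr' ?_
  filter_upwards [eventually_gt_atTop 0] with m hm
  have hcard : ({N | 1 ≤ N ∧ N ≤ m ∧ Q N}.ncard : ℝ) = m - #{N ∈ Icc 1 m | ¬Q N} := by
    have hsplit := card_filter_add_card_filter_not (s := Icc 1 m) Q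
    rw [Nat.card_Icc, Nat.add_sub_cancel] at hsplit
    have hset : {N | 1 ≤ N ∧ N ≤ m ∧ Q N} = ↑({N ∈ Icc 1 m | Q N}) := by
      ext N
      simp [and_assoc]
    rw [hset, Set.ncard_coe_finset, eq_sub_iff_add_eq]
    exact_mod_cast hsplit
  rw [hcard, sub_div, div_self (by positivity)]

theorem fermat_property_density_one_general
    {K Ω : Type} [Field K] [MeasurableSpace Ω]
    (S : ProperAdelicStructure K Ω) (hNor : S.Northcott)
    (p₀ : ℕ)
    (hfin : ∀ p : ℕ, p.Prime → p₀ ≤ p →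
      {q : Projectivization K (Fin 3 → K) |
        q.rep 0 ^ p + q.rep 1 ^ p = q.rep 2 ^ p}.Finite) :
    Tendsto (fun m : ℕ =>
        (({N : ℕ | 1 ≤ N ∧ N ≤ m ∧ ∀ x y : K, x ^ N + y ^ N = 1 →
            IsZeroOrRootOfUnity x ∧ IsZeroOrRootOfUnity y}.ncard : ℝ) / m))
      atTop (nhds 1) := by
  classical
  refine tendsto_ncard_div_one_of_tendsto_compl (Q := HasFermatProperty K)
    (tendsto_card_filter_Icc_div_zero p₀ fun p hp hp₀ => ?_)
  exact hNor.finite_setOf_not_hasFermatProperty_dvd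
    (finite_fermat_affine_of_finite_projective (hfin p hp hp₀))

theorem fermat_property_density_one
    {K Ω : Type} [Field K] [MeasurableSpace Ω]
    (S : ProperAdelicStructure K Ω) (hNor : S.Northcott)
    (p₀ : ℕ) (hp₀ : 0 < p₀)
    (hfin : ∀ p : ℕ, p.Prime → p₀ ≤ p →
      {q : Projectivization K (Fin 3 → K) |
        q.rep 0 ^ p + q.rep 1 ^ p = q.rep 2 ^ p}.Finite) :
    Tendsto (fun m : ℕ =>
        (({N : ℕ | 1 ≤ N ∧ N ≤ m ∧ ∀ x y : K, x ^ N + y ^ N = 1 →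
            IsZeroOrRootOfUnity x ∧ IsZeroOrRootOfUnity y}.ncard : ℝ) / m))
      atTop (nhds 1) :=
  fermat_property_density_one_general S hNor p₀ hfin
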